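/- arXiv:2103.00665 — 5 statements merged into one kernel-verified Lean document; each statement's English description precedes it below -/
import Mathlib

section
/- Let 𝔤 be a Lie superalgebra and 𝔞 = gr'(T'(𝔤)), graded by Δ = {0, α, β, α+β} with 𝔞₀ = 𝔤₀, 𝔞_α = 𝔤₁, 𝔞_β = d𝔤₁, 𝔞_{α+β} = d𝔤₀. Define a new parity assignment in which both α and β are odd (so 𝔞₀ and 𝔞_{α+β} are even, 𝔞_α and 𝔞_β are odd), and define a bracket [·,·]_𝔥 equal to [·,·]_𝔞 on all pairs of homogeneous components, extended by super skew-symmetry with respect to the new parity (in particular, for X ∈ 𝔥_α, Y ∈ 𝔥_β one sets [X,Y]_𝔥 := [X,Y]_𝔞 = -[Y,X]_𝔞 =: [Y,X]_𝔥). Then 𝔥 with this bracket and parity is a Lie superalgebra. -/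
/-- A Lie superalgebra over `K`, presented by its even part `g0`, its odd part `g1`,
and the four components of the bracket:
`b00 : [·,·] : 𝔤₀×𝔤₀ → 𝔤₀`, `b01 : 𝔤₀×𝔤₁ → 𝔤₁`, `b10 : 𝔤₁×𝔤₀ → 𝔤₁`, `b11 : 𝔤₁×𝔤₁ → 𝔤₀`.
The axioms are bilinearity, super skew-symmetry `[x,y] = -(-1)^{|x||y|}[y,x]`, and the
super Jacobi identity `[x,[y,z]] - (-1)^{|x||y|}[y,[x,z]] = [[x,y],z]`, written out in
all homogeneous components. -/
structure IsLieSuperAlg (K : Type*) [Field K]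
    {g0 g1 : Type*} [AddCommGroup g0] [Module K g0] [AddCommGroup g1] [Module K g1]
    (b00 : g0 → g0 → g0) (b01 : g0 → g1 → g1)
    (b10 : g1 → g0 → g1) (b11 : g1 → g1 → g0) : Prop where
  b00_addl : ∀ x x' y, b00 (x + x') y = b00 x y + b00 x' y
  b00_smull : ∀ (c : K) x y, b00 (c • x) y = c • b00 x y
  b00_addr : ∀ x y y', b00 x (y + y') = b00 x y + b00 x y'
  b00_smulr : ∀ (c : K) x y, b00 x (c • y) = c • b00 x y
  b01_addl : ∀ x x' y, b01 (x + x') y = b01 x y + b01 x' y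
  b01_smull : ∀ (c : K) x y, b01 (c • x) y = c • b01 x y
  b01_addr : ∀ x y y', b01 x (y + y') = b01 x y + b01 x y'
  b01_smulr : ∀ (c : K) x y, b01 x (c • y) = c • b01 x y
  b10_addl : ∀ x x' y, b10 (x + x') y = b10 x y + b10 x' y
  b10_smull : ∀ (c : K) x y, b10 (c • x) y = c • b10 x y
  b10_addr : ∀ x y y', b10 x (y + y') = b10 x y + b10 x y'
  b10_smulr : ∀ (c : K) x y, b10 x (c • y) = c • b10 x y
  b11_addl : ∀ x x' y, b11 (x + x') y = b11 x y + b11 x' y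
  b11_smull : ∀ (c : K) x y, b11 (c • x) y = c • b11 x y
  b11_addr : ∀ x y y', b11 x (y + y') = b11 x y + b11 x y'
  b11_smulr : ∀ (c : K) x y, b11 x (c • y) = c • b11 x y
  skew00 : ∀ x y, b00 x y = - b00 y x
  skew01 : ∀ x y, b01 x y = - b10 y x
  skew11 : ∀ x y, b11 x y = b11 y x
  jac000 : ∀ x y z, b00 x (b00 y z) - b00 y (b00 x z) = b00 (b00 x y) z
  jac001 : ∀ x y z, b01 x (b01 y z) - b01 y (b01 x z) = b01 (b00 x y) z
  jac010 : ∀ x y z, b01 x (b10 y z) - b10 y (b00 x z) = b10 (b01 x y) z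
  jac011 : ∀ x y z, b00 x (b11 y z) - b11 y (b01 x z) = b11 (b01 x y) z
  jac100 : ∀ x y z, b10 x (b00 y z) - b01 y (b10 x z) = b10 (b10 x y) z
  jac101 : ∀ x y z, b11 x (b01 y z) - b00 y (b11 x z) = b11 (b10 x y) z
  jac110 : ∀ x y z, b11 x (b10 y z) + b11 y (b10 x z) = b00 (b11 x y) z
  jac111 : ∀ x y z, b10 x (b11 y z) + b10 y (b11 x z) = b01 (b11 x y) z

namespace Stmt5

variable {K : Type*} [Field K]
variable {g0 g1 : Type*} [AddCommGroup g0] [Module K g0] [AddCommGroup g1] [Module K g1]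
variable (b00 : g0 → g0 → g0) (b01 : g0 → g1 → g1) (b10 : g1 → g0 → g1) (b11 : g1 → g1 → g0)

/- `𝔥 = π'(gr'(T'(𝔤)))`: the carrier of `𝔞 = gr'(T'(𝔤))` with the new parity assignment
in which both weights `α` and `β` are odd.  New even part: `𝔥₀ ⊕ 𝔥_{α+β} = 𝔤₀ ⊕ d𝔤₀ = g0 × g0`
(an element `(x, z)` stands for `x + d(z)`).  New odd part: `𝔥_α ⊕ 𝔥_β = 𝔤₁ ⊕ d𝔤₁ = g1 × g1`
(an element `(ξ, u)` stands for `ξ + d(u)`).  The bracket `[·,·]_𝔥` equals `[·,·]_𝔞` on all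
pairs of homogeneous components, extended by super skew-symmetry with respect to the new
parity: in particular for `X ∈ 𝔥_α`, `Y ∈ 𝔥_β` one sets
`[X,Y]_𝔥 := [X,Y]_𝔞 = -[Y,X]_𝔞 =: [Y,X]_𝔥`.  Recall from `𝔞`:
`[x, dz'] = d([x,z'])`, `[ξ, du'] = -d([ξ,u'])`, `[𝔤₁,𝔤₁] = 0`, `[𝔤₁,d𝔤₀] = 0`,
`[d𝔤,d𝔤] = 0`. -/
def hb00 : g0 × g0 → g0 × g0 → g0 × g0 :=
  fun p q => (b00 p.1 q.1, b00 p.1 q.2 - b00 q.1 p.2)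
def hb01 : g0 × g0 → g1 × g1 → g1 × g1 :=
  fun p q => (b01 p.1 q.1, b01 p.1 q.2)
def hb10 : g1 × g1 → g0 × g0 → g1 × g1 :=
  fun p q => (b10 p.1 q.1, b10 p.2 q.1)
def hb11 : g1 × g1 → g1 × g1 → g0 × g0 :=
  fun p q => (0, - b11 p.1 q.2 - b11 q.1 p.2)

/-- `𝔥 = π'(gr'(T'(𝔤)))`, i.e. the split Takiff superalgebra with the new
parity in which both `α` and `β` are odd and with the bracket equal to that of
`𝔞 = gr'(T'(𝔤))` on homogeneous components (extended by super skew-symmetry for the new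
parity), is a Lie superalgebra. -/
theorem parityChanged_isLieSuperAlg (h : IsLieSuperAlg K b00 b01 b10 b11) :
    IsLieSuperAlg K (hb00 b00) (hb01 b01) (hb10 b10) (hb11 b11) := by
  -- zero lemmas
  have a0r : ∀ x : g0, b00 x (0:g0) = 0 := fun x => by
    have := h.b00_smulr (0:K) x 0; rw [zero_smul, zero_smul] at this; exact this
  have a0l : ∀ y : g0, b00 (0:g0) y = 0 := fun y => by
    have := h.b00_smull (0:K) 0 y; rw [zero_smul, zero_smul] at this; exact this
  have c0l : ∀ ξ : g1, b01 (0:g0) ξ = 0 := fun ξ => by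
    have := h.b01_smull (0:K) 0 ξ; rw [zero_smul, zero_smul] at this; exact this
  have d0r : ∀ ξ : g1, b10 ξ (0:g0) = 0 := fun ξ => by
    have := h.b10_smulr (0:K) ξ 0; rw [zero_smul, zero_smul] at this; exact this
  -- neg and sub lemmas for b00 in the second argument
  have a_negr : ∀ x y : g0, b00 x (-y) = -(b00 x y) := fun x y => by
    rw [← neg_one_smul K y, h.b00_smulr, neg_one_smul]
  have a_subr : ∀ x y y' : g0, b00 x (y - y') = b00 x y - b00 x y' := fun x y y' => by
    rw [sub_eq_add_neg, h.b00_addr, a_negr, sub_eq_add_neg]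
  constructor
  -- b00_addl
  · intro x x' y
    rw [Prod.ext_iff]
    constructor <;>
      simp [hb00, h.b00_addl, h.b00_addr] <;> abel
  -- b00_smull
  · intro c x y
    rw [Prod.ext_iff]
    constructor <;>
      simp [hb00, h.b00_smull, h.b00_smulr, smul_sub] <;> abel
  -- b00_addr
  · intro x y y'
    rw [Prod.ext_iff]
    constructor <;>
      simp [hb00, h.b00_addl, h.b00_addr] <;> abel
  -- b00_smulr
  · intro c x y
    rw [Prod.ext_iff]
    constructor <;>
      simp [hb00, h.b00_smull, h.b00_smulr, smul_sub] <;> abel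
  -- b01_addl
  · intro x x' y
    rw [Prod.ext_iff]
    constructor <;>
      simp [hb01, h.b01_addl, h.b01_addr] <;> abel
  -- b01_smull
  · intro c x y
    rw [Prod.ext_iff]
    constructor <;>
      simp [hb01, h.b01_smull, h.b01_smulr] <;> abel
  -- b01_addr
  · intro x y y'
    rw [Prod.ext_iff]
    constructor <;>
      simp [hb01, h.b01_addl, h.b01_addr] <;> abel
  -- b01_smulr
  · intro c x y
    rw [Prod.ext_iff]
    constructor <;>
      simp [hb01, h.b01_smull, h.b01_smulr] <;> abel
  -- b10_addl
  · intro x x' y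
    rw [Prod.ext_iff]
    constructor <;>
      simp [hb10, h.b10_addl, h.b10_addr] <;> abel
  -- b10_smull
  · intro c x y
    rw [Prod.ext_iff]
    constructor <;>
      simp [hb10, h.b10_smull, h.b10_smulr] <;> abel
  -- b10_addr
  · intro x y y'
    rw [Prod.ext_iff]
    constructor <;>
      simp [hb10, h.b10_addl, h.b10_addr] <;> abel
  -- b10_smulr
  · intro c x y
    rw [Prod.ext_iff]
    constructor <;>
      simp [hb10, h.b10_smull, h.b10_smulr] <;> abel
  -- b11_addl
  · intro x x' y
    rw [Prod.ext_iff]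
    constructor <;>
      simp [hb11, h.b11_addl, h.b11_addr] <;> abel
  -- b11_smull
  · intro c x y
    rw [Prod.ext_iff]
    constructor <;>
      simp [hb11, h.b11_smull, h.b11_smulr, smul_sub, smul_neg] <;> abel
  -- b11_addr
  · intro x y y'
    rw [Prod.ext_iff]
    constructor <;>
      simp [hb11, h.b11_addl, h.b11_addr] <;> abel
  -- b11_smulr
  · intro c x y
    rw [Prod.ext_iff]
    constructor <;>
      simp [hb11, h.b11_smull, h.b11_smulr, smul_sub, smul_neg] <;> abel
  -- skew00
  · intro x y
    rw [Prod.ext_iff]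
    constructor
    · simpa [hb00] using h.skew00 x.1 y.1
    · simp [hb00, neg_sub]
  -- skew01
  · intro x y
    rw [Prod.ext_iff]
    constructor <;> simp [hb01, hb10, h.skew01]
  -- skew11
  · intro x y
    rw [Prod.ext_iff]
    constructor
    · simp [hb11]
    · simp [hb11]
      abel
  -- jac000
  · intro x y z
    rw [Prod.ext_iff]
    constructor
    · simpa [hb00] using h.jac000 x.1 y.1 z.1
    · have e1 := sub_eq_iff_eq_add.mp (h.jac000 x.1 y.1 z.2)
      have e2 := sub_eq_iff_eq_add.mp (h.jac000 x.1 z.1 y.2)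
      have e3 := sub_eq_iff_eq_add.mp (h.jac000 y.1 z.1 x.2)
      simp only [hb00, Prod.snd_sub, Prod.fst_sub, a_subr, a_negr]
      rw [e1, e2, e3]
      abel
  -- jac001
  · intro x y z
    rw [Prod.ext_iff]
    constructor
    · simpa [hb00, hb01] using h.jac001 x.1 y.1 z.1
    · simpa [hb00, hb01] using h.jac001 x.1 y.1 z.2
  -- jac010
  · intro x y z
    rw [Prod.ext_iff]
    constructor
    · simpa [hb00, hb01, hb10] using h.jac010 x.1 y.1 z.1
    · simpa [hb00, hb01, hb10] using h.jac010 x.1 y.2 z.1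
  -- jac011
  · intro x y z
    rw [Prod.ext_iff]
    constructor
    · simp [hb00, hb01, hb11, a0r]
    · have f1 := sub_eq_iff_eq_add.mp (h.jac011 x.1 y.1 z.2)
      have f2 := sub_eq_iff_eq_add.mp (h.jac011 x.1 z.1 y.2)
      simp only [hb00, hb01, hb11, Prod.snd_sub, a_subr, a_negr, a0l]
      rw [f1, f2]
      abel
  -- jac100
  · intro x y z
    rw [Prod.ext_iff]
    constructor
    · simpa [hb00, hb01, hb10] using h.jac100 x.1 y.1 z.1
    · simpa [hb00, hb01, hb10] using h.jac100 x.2 y.1 z.1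
  -- jac101
  · intro x y z
    rw [Prod.ext_iff]
    constructor
    · simp [hb00, hb01, hb10, hb11, a0r]
    · have g1' := sub_eq_iff_eq_add.mp (h.jac101 x.1 y.1 z.2)
      have g2' := sub_eq_iff_eq_add.mp (h.jac101 x.2 y.1 z.1)
      simp only [hb00, hb01, hb10, hb11, Prod.snd_sub, a_subr, a_negr, a0l]
      rw [h.skew11 (b01 y.1 z.1) x.2, h.skew11 z.1 x.2,
        h.skew11 z.1 (b10 x.2 y.1), g1', g2']
      abel
  -- jac110
  · intro x y z
    rw [Prod.ext_iff]
    constructor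
    · simp [hb00, hb10, hb11, a0l]
    · have k1 := eq_sub_of_add_eq (h.jac110 x.1 y.2 z.1)
      have k2 := eq_sub_of_add_eq (h.jac110 y.1 x.2 z.1)
      simp only [hb00, hb10, hb11, Prod.snd_add, a_subr, a_negr, a0l]
      rw [h.skew11 (b10 y.1 z.1) x.2, h.skew11 (b10 x.1 z.1) y.2,
        h.skew00 z.1 (b11 x.1 y.2), h.skew00 z.1 (b11 y.1 x.2), k1, k2]
      abel
  -- jac111
  · intro x y z
    rw [Prod.ext_iff]
    constructor <;> simp [hb01, hb10, hb11, d0r, c0l]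

end Stmt5
end

section
/- Let 𝔤 be a Lie superalgebra and 𝔥 = π'(gr'(T'^∞(𝔤))) as above. For n ≥ 0 define 𝔭_n := diag part { Σ_{C(I)=n-1} d_I(X) + Σ_{C(J)=n} d_J(X) : X ∈ 𝔤_{n̄} } (sums over all index sets of the indicated cardinality, n̄ = n mod 2; for n = 0, 𝔭₀ = 𝔤₀). Then 𝔭 = ⊕_{n≥0} 𝔭_n is a ℤ-graded Lie subsuperalgebra of 𝔥: for X ∈ 𝔤_ī, Y ∈ 𝔤_j̄ with corresponding elements X' ∈ 𝔭_i, Y' ∈ 𝔭_j, one has [X', Y'] = binom(i+j, i) · ( Σ_{C(K)=i+j-1} d_K([X,Y]) + Σ_{C(K)=i+j} d_K([X,Y]) ) ∈ 𝔭_{i+j}. -/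
namespace Stmt10

variable {K : Type*} [Field K]
variable {g0 g1 : Type*} [AddCommGroup g0] [Module K g0] [AddCommGroup g1] [Module K g1]
variable (b00 : g0 → g0 → g0) (b01 : g0 → g1 → g1) (b10 : g1 → g0 → g1) (b11 : g1 → g1 → g0)

/-- Bracket component of `𝔥 = π'(gr'(T'^∞(𝔤)))` pairing `d_I(𝔤)` with `d_J(𝔤)`
(`I, J` disjoint): zero on `(𝔤_ī, 𝔤_j̄)` if `#I + ī` and `#J + j̄` are both odd,
otherwise `d_{I∪J}([X,Y])`. -/
def hComp (I J : Finset ℕ) : (g0 × g1) → (g0 × g1) → (g0 × g1) :=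
  fun v w =>
    ((if I.card % 2 = 1 ∧ J.card % 2 = 1 then 0 else b00 v.1 w.1) +
       (if I.card % 2 = 0 ∧ J.card % 2 = 0 then 0 else b11 v.2 w.2),
     (if I.card % 2 = 1 ∧ J.card % 2 = 0 then 0 else b01 v.1 w.2) +
       (if I.card % 2 = 0 ∧ J.card % 2 = 1 then 0 else b10 v.2 w.1))

/-- The bracket of `𝔥` (components of `[d_I(𝔤), d_J(𝔤)]` vanish unless `I ∩ J = ∅`). -/
def hBr : (∀ _ : Finset ℕ, g0 × g1) → (∀ _ : Finset ℕ, g0 × g1) →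
    (∀ _ : Finset ℕ, g0 × g1) :=
  fun f g S => ∑ I ∈ S.powerset, hComp b00 b01 b10 b11 I (S \ I) (f I) (g (S \ I))

/-- For even `n` and `X ∈ 𝔤₀`: the element `Σ_{#I = n-1} d_I(X) + Σ_{#J = n} d_J(X)`. -/
def eltE (n : ℕ) (X : g0) : ∀ _ : Finset ℕ, g0 × g1 :=
  fun I => (if I.card = n ∨ I.card + 1 = n then X else 0, 0)

/-- For odd `n` and `X ∈ 𝔤₁`: the element `Σ_{#I = n-1} d_I(X) + Σ_{#J = n} d_J(X)`. -/
def eltO (n : ℕ) (X : g1) : ∀ _ : Finset ℕ, g0 × g1 :=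
  fun I => (0, if I.card = n ∨ I.card + 1 = n then X else 0)

/-- Membership in `𝔭_n`, the diagonal subspace of degree `n`. -/
def pmem (n : ℕ) (f : ∀ _ : Finset ℕ, g0 × g1) : Prop :=
  if n % 2 = 0 then ∃ X : g0, f = eltE n X else ∃ X : g1, f = eltO n X

lemma keyCount {M : Type*} [AddCommMonoid M] (i j : ℕ) (S : Finset ℕ) (Z : M) :
    (∑ I ∈ S.powerset,
      if (I.card = i ∧ (S \ I).card = j) ∨ (I.card = i ∧ (S \ I).card + 1 = j) ∨
          (I.card + 1 = i ∧ (S \ I).card = j) then Z else 0)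
    = (if S.card = i + j ∨ S.card + 1 = i + j then (i + j).choose i else 0) • Z := by
  rw [Finset.sum_ite, Finset.sum_const, Finset.sum_const_zero, add_zero]
  suffices hc : (S.powerset.filter (fun I => (I.card = i ∧ (S \ I).card = j) ∨
      (I.card = i ∧ (S \ I).card + 1 = j) ∨ (I.card + 1 = i ∧ (S \ I).card = j))).card
      = (if S.card = i + j ∨ S.card + 1 = i + j then (i + j).choose i else 0) by
    rw [hc]
  have hfacts : ∀ I ∈ S.powerset, (S \ I).card = S.card - I.card ∧ I.card ≤ S.card := by
    intro I hI
    have hsub := Finset.mem_powerset.mp hI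
    exact ⟨Finset.card_sdiff_of_subset hsub, Finset.card_le_card hsub⟩
  by_cases h1 : S.card = i + j
  · rw [if_pos (Or.inl h1)]
    have he : S.powerset.filter (fun I => (I.card = i ∧ (S \ I).card = j) ∨
        (I.card = i ∧ (S \ I).card + 1 = j) ∨ (I.card + 1 = i ∧ (S \ I).card = j))
        = S.powerset.filter (fun I => I.card = i) := by
      apply Finset.filter_congr
      intro I hI
      obtain ⟨hsd, hle⟩ := hfacts I hI
      rw [hsd]
      constructor <;> intro <;> omega
    rw [he, ← Finset.powersetCard_eq_filter, Finset.card_powersetCard, h1]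
  · by_cases h2 : S.card + 1 = i + j
    · rw [if_pos (Or.inr h2)]
      rcases Nat.eq_zero_or_pos i with hi0 | hip
      · subst hi0
        have he : S.powerset.filter (fun I => (I.card = 0 ∧ (S \ I).card = j) ∨
            (I.card = 0 ∧ (S \ I).card + 1 = j) ∨ (I.card + 1 = 0 ∧ (S \ I).card = j))
            = S.powerset.filter (fun I => I.card = 0) := by
          apply Finset.filter_congr
          intro I hI
          obtain ⟨hsd, hle⟩ := hfacts I hI
          rw [hsd]
          constructor <;> intro <;> omega
        rw [he, ← Finset.powersetCard_eq_filter, Finset.card_powersetCard]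
        simp
      · obtain ⟨m, rfl⟩ : ∃ m, i = m + 1 := ⟨i - 1, by omega⟩
        have he : S.powerset.filter (fun I => (I.card = m + 1 ∧ (S \ I).card = j) ∨
            (I.card = m + 1 ∧ (S \ I).card + 1 = j) ∨ (I.card + 1 = m + 1 ∧ (S \ I).card = j))
            = S.powerset.filter (fun I => I.card = m + 1 ∨ I.card = m) := by
          apply Finset.filter_congr
          intro I hI
          obtain ⟨hsd, hle⟩ := hfacts I hI
          rw [hsd]
          constructor <;> intro <;> omega
        rw [he, Finset.filter_or, Finset.card_union_of_disjoint, ← Finset.powersetCard_eq_filter,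
          ← Finset.powersetCard_eq_filter, Finset.card_powersetCard, Finset.card_powersetCard]
        · have : S.card = m + j := by omega
          rw [this, show m + 1 + j = (m + j) + 1 by omega, Nat.choose_succ_succ]
          simp only [Nat.succ_eq_add_one]
          omega
        · rw [Finset.disjoint_left]
          intro a ha hb
          simp only [Finset.mem_filter] at ha hb
          omega
    · rw [if_neg (by tauto)]
      rw [Finset.filter_false_of_mem, Finset.card_empty]
      intro I hI
      obtain ⟨hsd, hle⟩ := hfacts I hI
      rw [hsd]
      omega

section Aux
variable {K : Type*} [Field K]
variable {g0 g1 : Type*} [AddCommGroup g0] [Module K g0] [AddCommGroup g1] [Module K g1]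
variable {b00 : g0 → g0 → g0} {b01 : g0 → g1 → g1} {b10 : g1 → g0 → g1} {b11 : g1 → g1 → g0}

lemma z00r (h : IsLieSuperAlg K b00 b01 b10 b11) : ∀ x : g0, b00 x 0 = 0 := fun x => by
  have := h.b00_smulr 0 x 0; simpa using this
lemma z00l (h : IsLieSuperAlg K b00 b01 b10 b11) : ∀ y : g0, b00 0 y = 0 := fun y => by
  have := h.b00_smull 0 0 y; simpa using this
lemma z01r (h : IsLieSuperAlg K b00 b01 b10 b11) : ∀ x : g0, b01 x 0 = 0 := fun x => by
  have := h.b01_smulr 0 x 0; simpa using this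
lemma z01l (h : IsLieSuperAlg K b00 b01 b10 b11) : ∀ y : g1, b01 0 y = 0 := fun y => by
  have := h.b01_smull 0 0 y; simpa using this
lemma z10r (h : IsLieSuperAlg K b00 b01 b10 b11) : ∀ x : g1, b10 x 0 = 0 := fun x => by
  have := h.b10_smulr 0 x 0; simpa using this
lemma z10l (h : IsLieSuperAlg K b00 b01 b10 b11) : ∀ y : g0, b10 0 y = 0 := fun y => by
  have := h.b10_smull 0 0 y; simpa using this
lemma z11r (h : IsLieSuperAlg K b00 b01 b10 b11) : ∀ x : g1, b11 x 0 = 0 := fun x => by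
  have := h.b11_smulr 0 x 0; simpa using this
lemma z11l (h : IsLieSuperAlg K b00 b01 b10 b11) : ∀ y : g1, b11 0 y = 0 := fun y => by
  have := h.b11_smull 0 0 y; simpa using this

lemma smul_eltE (c : K) (n : ℕ) (X : g0) :
    c • (eltE n X : ∀ _ : Finset ℕ, g0 × g1) = eltE n (c • X) := by
  funext I
  by_cases hp : I.card = n ∨ I.card + 1 = n <;>
    simp [eltE, hp]

lemma smul_eltO (c : K) (n : ℕ) (X : g1) :
    c • (eltO n X : ∀ _ : Finset ℕ, g0 × g1) = eltO n (c • X) := by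
  funext I
  by_cases hp : I.card = n ∨ I.card + 1 = n <;>
    simp [eltO, hp]

lemma caseEE (h : IsLieSuperAlg K b00 b01 b10 b11) (i j : ℕ) (hi : i % 2 = 0)
    (hj : j % 2 = 0) (X : g0) (Y : g0) :
    hBr b00 b01 b10 b11 (eltE i X) (eltE j Y) =
      (((i + j).choose i : K)) • eltE (i + j) (b00 X Y) := by
  funext S
  have hpt : ∀ I ∈ S.powerset,
      hComp b00 b01 b10 b11 I (S \ I) (eltE i X I) (eltE j Y (S \ I)) =
      (if (I.card = i ∧ (S \ I).card = j) ∨ (I.card = i ∧ (S \ I).card + 1 = j) ∨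
          (I.card + 1 = i ∧ (S \ I).card = j) then ((b00 X Y, 0) : g0 × g1) else 0) := by
    intro I _
    simp only [hComp, eltE, z11l h, z01r h, z10l h, ite_self, add_zero, zero_add]
    split_ifs <;>
      first
        | rfl
        | omega
        | simp [z00l h, z00r h, Prod.ext_iff]
        | (exfalso; omega)
  calc hBr b00 b01 b10 b11 (eltE i X) (eltE j Y) S
      = ∑ I ∈ S.powerset, (if (I.card = i ∧ (S \ I).card = j) ∨
          (I.card = i ∧ (S \ I).card + 1 = j) ∨ (I.card + 1 = i ∧ (S \ I).card = j)
          then ((b00 X Y, 0) : g0 × g1) else 0) := Finset.sum_congr rfl hpt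
    _ = (if S.card = i + j ∨ S.card + 1 = i + j then (i + j).choose i else 0) •
          ((b00 X Y, 0) : g0 × g1) := keyCount i j S _
    _ = (((i + j).choose i : K)) • eltE (i + j) (b00 X Y) S := by
          by_cases hS : S.card = i + j ∨ S.card + 1 = i + j <;>
            simp [eltE, hS, Prod.ext_iff, Nat.cast_smul_eq_nsmul]

lemma caseEO (h : IsLieSuperAlg K b00 b01 b10 b11) (i j : ℕ) (hi : i % 2 = 0)
    (hj : j % 2 = 1) (X : g0) (Y : g1) :
    hBr b00 b01 b10 b11 (eltE i X) (eltO j Y) =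
      (((i + j).choose i : K)) • eltO (i + j) (b01 X Y) := by
  funext S
  have hpt : ∀ I ∈ S.powerset,
      hComp b00 b01 b10 b11 I (S \ I) (eltE i X I) (eltO j Y (S \ I)) =
      (if (I.card = i ∧ (S \ I).card = j) ∨ (I.card = i ∧ (S \ I).card + 1 = j) ∨
          (I.card + 1 = i ∧ (S \ I).card = j) then ((0, b01 X Y) : g0 × g1) else 0) := by
    intro I _
    simp only [hComp, eltE, eltO, z00r h, z11l h, z10l h, ite_self, add_zero, zero_add]
    split_ifs <;>
      first
        | rfl
        | omega
        | simp [z01l h, z01r h, Prod.ext_iff]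
        | (exfalso; omega)
  calc hBr b00 b01 b10 b11 (eltE i X) (eltO j Y) S
      = ∑ I ∈ S.powerset, (if (I.card = i ∧ (S \ I).card = j) ∨
          (I.card = i ∧ (S \ I).card + 1 = j) ∨ (I.card + 1 = i ∧ (S \ I).card = j)
          then ((0, b01 X Y) : g0 × g1) else 0) := Finset.sum_congr rfl hpt
    _ = (if S.card = i + j ∨ S.card + 1 = i + j then (i + j).choose i else 0) •
          ((0, b01 X Y) : g0 × g1) := keyCount i j S _
    _ = (((i + j).choose i : K)) • eltO (i + j) (b01 X Y) S := by
          by_cases hS : S.card = i + j ∨ S.card + 1 = i + j <;>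
            simp [eltO, hS, Prod.ext_iff, Nat.cast_smul_eq_nsmul]

lemma caseOE (h : IsLieSuperAlg K b00 b01 b10 b11) (i j : ℕ) (hi : i % 2 = 1)
    (hj : j % 2 = 0) (X : g1) (Y : g0) :
    hBr b00 b01 b10 b11 (eltO i X) (eltE j Y) =
      (((i + j).choose i : K)) • eltO (i + j) (b10 X Y) := by
  funext S
  have hpt : ∀ I ∈ S.powerset,
      hComp b00 b01 b10 b11 I (S \ I) (eltO i X I) (eltE j Y (S \ I)) =
      (if (I.card = i ∧ (S \ I).card = j) ∨ (I.card = i ∧ (S \ I).card + 1 = j) ∨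
          (I.card + 1 = i ∧ (S \ I).card = j) then ((0, b10 X Y) : g0 × g1) else 0) := by
    intro I _
    simp only [hComp, eltE, eltO, z00l h, z11r h, z01l h, ite_self, add_zero, zero_add]
    split_ifs <;>
      first
        | rfl
        | omega
        | simp [z10l h, z10r h, Prod.ext_iff]
        | (exfalso; omega)
  calc hBr b00 b01 b10 b11 (eltO i X) (eltE j Y) S
      = ∑ I ∈ S.powerset, (if (I.card = i ∧ (S \ I).card = j) ∨
          (I.card = i ∧ (S \ I).card + 1 = j) ∨ (I.card + 1 = i ∧ (S \ I).card = j)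
          then ((0, b10 X Y) : g0 × g1) else 0) := Finset.sum_congr rfl hpt
    _ = (if S.card = i + j ∨ S.card + 1 = i + j then (i + j).choose i else 0) •
          ((0, b10 X Y) : g0 × g1) := keyCount i j S _
    _ = (((i + j).choose i : K)) • eltO (i + j) (b10 X Y) S := by
          by_cases hS : S.card = i + j ∨ S.card + 1 = i + j <;>
            simp [eltO, hS, Prod.ext_iff, Nat.cast_smul_eq_nsmul]

lemma caseOO (h : IsLieSuperAlg K b00 b01 b10 b11) (i j : ℕ) (hi : i % 2 = 1)
    (hj : j % 2 = 1) (X : g1) (Y : g1) :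
    hBr b00 b01 b10 b11 (eltO i X) (eltO j Y) =
      (((i + j).choose i : K)) • eltE (i + j) (b11 X Y) := by
  funext S
  have hpt : ∀ I ∈ S.powerset,
      hComp b00 b01 b10 b11 I (S \ I) (eltO i X I) (eltO j Y (S \ I)) =
      (if (I.card = i ∧ (S \ I).card = j) ∨ (I.card = i ∧ (S \ I).card + 1 = j) ∨
          (I.card + 1 = i ∧ (S \ I).card = j) then ((b11 X Y, 0) : g0 × g1) else 0) := by
    intro I _
    simp only [hComp, eltO, z00l h, z01l h, z10r h, ite_self, add_zero, zero_add]
    split_ifs <;>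
      first
        | rfl
        | omega
        | simp [z11l h, z11r h, Prod.ext_iff]
        | (exfalso; omega)
  calc hBr b00 b01 b10 b11 (eltO i X) (eltO j Y) S
      = ∑ I ∈ S.powerset, (if (I.card = i ∧ (S \ I).card = j) ∨
          (I.card = i ∧ (S \ I).card + 1 = j) ∨ (I.card + 1 = i ∧ (S \ I).card = j)
          then ((b11 X Y, 0) : g0 × g1) else 0) := Finset.sum_congr rfl hpt
    _ = (if S.card = i + j ∨ S.card + 1 = i + j then (i + j).choose i else 0) •
          ((b11 X Y, 0) : g0 × g1) := keyCount i j S _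
    _ = (((i + j).choose i : K)) • eltE (i + j) (b11 X Y) S := by
          by_cases hS : S.card = i + j ∨ S.card + 1 = i + j <;>
            simp [eltE, hS, Prod.ext_iff, Nat.cast_smul_eq_nsmul]

end Aux

/-- `𝔭 = ⊕_{n≥0} 𝔭_n` is a ℤ-graded Lie subsuperalgebra of
`𝔥 = π'(gr'(T'^∞(𝔤)))`: `[𝔭_i, 𝔭_j] ⊆ 𝔭_{i+j}`, and for `X ∈ 𝔤_ī`, `Y ∈ 𝔤_j̄` with
corresponding diagonal elements `X' ∈ 𝔭_i`, `Y' ∈ 𝔭_j`,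
`[X', Y'] = C(i+j, i) • (Σ_{#K = i+j-1} d_K([X,Y]) + Σ_{#K = i+j} d_K([X,Y])) ∈ 𝔭_{i+j}`. -/
theorem diag_graded_subalgebra (h : IsLieSuperAlg K b00 b01 b10 b11) :
    (∀ i j : ℕ, ∀ f g : ∀ _ : Finset ℕ, g0 × g1,
      pmem i f → pmem j g → pmem (i + j) (hBr b00 b01 b10 b11 f g)) ∧
    (∀ i j : ℕ, i % 2 = 0 → j % 2 = 0 → ∀ (X : g0) (Y : g0),
      hBr b00 b01 b10 b11 (eltE i X) (eltE j Y) =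
        (((i + j).choose i : K)) • eltE (i + j) (b00 X Y)) ∧
    (∀ i j : ℕ, i % 2 = 0 → j % 2 = 1 → ∀ (X : g0) (Y : g1),
      hBr b00 b01 b10 b11 (eltE i X) (eltO j Y) =
        (((i + j).choose i : K)) • eltO (i + j) (b01 X Y)) ∧
    (∀ i j : ℕ, i % 2 = 1 → j % 2 = 0 → ∀ (X : g1) (Y : g0),
      hBr b00 b01 b10 b11 (eltO i X) (eltE j Y) =
        (((i + j).choose i : K)) • eltO (i + j) (b10 X Y)) ∧
    (∀ i j : ℕ, i % 2 = 1 → j % 2 = 1 → ∀ (X : g1) (Y : g1),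
      hBr b00 b01 b10 b11 (eltO i X) (eltO j Y) =
        (((i + j).choose i : K)) • eltE (i + j) (b11 X Y)) := by
  refine ⟨?_, caseEE h, caseEO h, caseOE h, caseOO h⟩
  intro i j f g hf hg
  rcases Nat.mod_two_eq_zero_or_one i with hi' | hi' <;>
    rcases Nat.mod_two_eq_zero_or_one j with hj' | hj'
  · rw [pmem, if_pos hi'] at hf
    rw [pmem, if_pos hj'] at hg
    obtain ⟨X, rfl⟩ := hf
    obtain ⟨Y, rfl⟩ := hg
    rw [pmem, if_pos (by omega : (i + j) % 2 = 0)]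
    exact ⟨(((i + j).choose i : K)) • b00 X Y, by rw [caseEE h i j hi' hj', smul_eltE]⟩
  · rw [pmem, if_pos hi'] at hf
    rw [pmem, if_neg (by omega : ¬ j % 2 = 0)] at hg
    obtain ⟨X, rfl⟩ := hf
    obtain ⟨Y, rfl⟩ := hg
    rw [pmem, if_neg (by omega : ¬ (i + j) % 2 = 0)]
    exact ⟨(((i + j).choose i : K)) • b01 X Y, by rw [caseEO h i j hi' hj', smul_eltO]⟩
  · rw [pmem, if_neg (by omega : ¬ i % 2 = 0)] at hf
    rw [pmem, if_pos hj'] at hg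
    obtain ⟨X, rfl⟩ := hf
    obtain ⟨Y, rfl⟩ := hg
    rw [pmem, if_neg (by omega : ¬ (i + j) % 2 = 0)]
    exact ⟨(((i + j).choose i : K)) • b10 X Y, by rw [caseOE h i j hi' hj', smul_eltO]⟩
  · rw [pmem, if_neg (by omega : ¬ i % 2 = 0)] at hf
    rw [pmem, if_neg (by omega : ¬ j % 2 = 0)] at hg
    obtain ⟨X, rfl⟩ := hf
    obtain ⟨Y, rfl⟩ := hg
    rw [pmem, if_pos (by omega : (i + j) % 2 = 0)]
    exact ⟨(((i + j).choose i : K)) • b11 X Y, by rw [caseOO h i j hi' hj', smul_eltE]⟩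

end Stmt10
end

section
/- Let φ: A → B be a surjective homomorphism of abelian groups, 𝔞 an A-graded Lie superalgebra, 𝔤 a B-graded Lie superalgebra, ψ: 𝔞 → 𝔤 a B-graded Lie superalgebra homomorphism (where 𝔞 is B-graded via φ), and (𝔭, Π') a φ-covering of 𝔤. Then there exists a unique A-graded Lie superalgebra homomorphism Ψ: 𝔞 → 𝔭 with Π' ∘ Ψ = ψ. -/
/-!
Since `Π'` maps each `𝔭_a` bijectively onto `𝔤_{φ(a)}`, on a homogeneous component `𝔞_a` the
lift `Ψ` is forced to be `(Π'|_{𝔭_a})⁻¹ ∘ ψ`, and these component maps extend uniquely to a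
linear map because `𝔞` is the internal direct sum of its components. This lift preserves
brackets: for `x ∈ 𝔞_a`, `y ∈ 𝔞_b` both `Ψ [x, y]` and `[Ψ x, Ψ y]` lie in `𝔭_{a+b}` and have
the same image `[ψ x, ψ y]` under `Π'`, which is injective on `𝔭_{a+b}`; bilinearity does
the rest.
-/

/-- The sign `(-1)^{ij}` for parities `i j : ℤ₂`, as an element of `K`. -/
def ssign (K : Type*) [Field K] (i j : ZMod 2) : K := if i = 1 ∧ j = 1 then -1 else 1

/-- An `A`-graded Lie superalgebra over `K`, where `A` is an abelian group and the
parities are governed by a group homomorphism `δ : A → ℤ₂`: a grading `p` of the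
carrier `L` by submodules whose internal direct sum is `L`, and a bilinear bracket `br`
with `[p a, p b] ⊆ p (a+b)`, super skew-symmetry and the super Jacobi identity
(signs `(-1)^{δ(a)δ(b)}`). -/
structure IsGradedLieSuperAlg (K : Type*) [Field K] {A : Type*} [AddCommGroup A]
    [DecidableEq A] {L : Type*} [AddCommGroup L] [Module K L]
    (δ : A →+ ZMod 2) (p : A → Submodule K L) (br : L → L → L) : Prop where
  add_left : ∀ x x' y, br (x + x') y = br x y + br x' y
  smul_left : ∀ (c : K) x y, br (c • x) y = c • br x y
  add_right : ∀ x y y', br x (y + y') = br x y + br x y'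
  smul_right : ∀ (c : K) x y, br x (c • y) = c • br x y
  internal : DirectSum.IsInternal p
  grade : ∀ a b, ∀ x ∈ p a, ∀ y ∈ p b, br x y ∈ p (a + b)
  skew : ∀ a b, ∀ x ∈ p a, ∀ y ∈ p b, br x y = - ssign K (δ a) (δ b) • br y x
  jacobi : ∀ a b, ∀ x ∈ p a, ∀ y ∈ p b, ∀ z,
    br x (br y z) - ssign K (δ a) (δ b) • br y (br x z) = br (br x y) z

structure IsCovering (K : Type*) [Field K] {A B : Type*} [AddCommGroup A] [AddCommGroup B]
    {P G : Type*} [AddCommGroup P] [Module K P] [AddCommGroup G] [Module K G]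
    (φ : A →+ B) (p : A → Submodule K P) (brp : P → P → P)
    (q : B → Submodule K G) (brg : G → G → G) (prj : P →ₗ[K] G) : Prop where
  hom : ∀ x y, prj (brp x y) = brg (prj x) (prj y)
  maps : ∀ a, ∀ x ∈ p a, prj x ∈ q (φ a)
  inj : ∀ a, ∀ x ∈ p a, prj x = 0 → x = 0
  surj : ∀ a, ∀ y ∈ q (φ a), ∃ x ∈ p a, prj x = y

namespace DirectSum.IsInternal

section Linear

variable {ι R M N : Type*} [DecidableEq ι] [Semiring R] [AddCommMonoid M] [Module R M]
  [AddCommMonoid N] [Module R N] {p : ι → Submodule R M}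

theorem linearMap_ext (h : IsInternal p) {f g : M →ₗ[R] N}
    (hfg : ∀ i, ∀ x ∈ p i, f x = g x) : f = g :=
  LinearMap.eqLocus_eq_top.mp <| eq_top_iff.mpr <|
    h.submodule_iSup_eq_top ▸ iSup_le fun i x hx => hfg i x hx

noncomputable def lift (h : IsInternal p) (f : ∀ i, p i →ₗ[R] N) : M →ₗ[R] N :=
  toModule R ι N f ∘ₗ (LinearEquiv.ofBijective (coeLinearMap p) h).symm.toLinearMap

theorem lift_apply_of_mem (h : IsInternal p) (f : ∀ i, p i →ₗ[R] N) {i : ι} {x : M}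
    (hx : x ∈ p i) : h.lift f x = f i ⟨x, hx⟩ := by
  have hdecomp : (LinearEquiv.ofBijective (coeLinearMap p) h).symm x = lof R ι _ i ⟨x, hx⟩ :=
    (LinearEquiv.symm_apply_eq _).mpr (coeLinearMap_lof p i ⟨x, hx⟩).symm
  rw [lift, LinearMap.comp_apply, LinearEquiv.coe_coe, hdecomp, toModule_lof]

end Linear

section Bilinear

variable {ι κ R M M' N : Type*} [DecidableEq ι] [DecidableEq κ] [CommSemiring R]
  [AddCommMonoid M] [Module R M] [AddCommMonoid M'] [Module R M'] [AddCommMonoid N] [Module R N]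
  {p : ι → Submodule R M} {p' : κ → Submodule R M'}

theorem linearMap_ext₂ (h : IsInternal p) (h' : IsInternal p') {f g : M →ₗ[R] M' →ₗ[R] N}
    (hfg : ∀ i j, ∀ x ∈ p i, ∀ y ∈ p' j, f x y = g x y) : f = g :=
  h.linearMap_ext fun i x hx => h'.linearMap_ext fun j y hy => hfg i j x hx y hy

end Bilinear

end DirectSum.IsInternal

namespace IsGradedLieSuperAlg

variable {K A L : Type*} [Field K] [AddCommGroup A] [DecidableEq A] [AddCommGroup L] [Module K L]
  {δ : A →+ ZMod 2} {p : A → Submodule K L} {br : L → L → L}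

def bracket (h : IsGradedLieSuperAlg K δ p br) : L →ₗ[K] L →ₗ[K] L :=
  LinearMap.mk₂ K br h.add_left h.smul_left h.add_right h.smul_right

@[simp]
theorem bracket_apply (h : IsGradedLieSuperAlg K δ p br) (x y : L) : h.bracket x y = br x y :=
  rfl

end IsGradedLieSuperAlg

namespace IsCovering

variable {K A B P G : Type*} [Field K] [AddCommGroup A] [AddCommGroup B] [AddCommGroup P]
  [Module K P] [AddCommGroup G] [Module K G] {φ : A →+ B} {p : A → Submodule K P}
  {brp : P → P → P} {q : B → Submodule K G} {brg : G → G → G} {prj : P →ₗ[K] G}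

theorem eq_of_prj_eq (hcov : IsCovering K φ p brp q brg prj) {a : A} {u v : P} (hu : u ∈ p a)
    (hv : v ∈ p a) (h : prj u = prj v) : u = v :=
  sub_eq_zero.mp <| hcov.inj a _ (sub_mem hu hv) (by rw [map_sub, h, sub_self])

theorem bijective_restrict (hcov : IsCovering K φ p brp q brg prj) (a : A) :
    Function.Bijective (prj.restrict (hcov.maps a)) := by
  refine ⟨fun u v huv => Subtype.ext <| hcov.eq_of_prj_eq u.2 v.2 (congrArg Subtype.val huv),
    fun y => ?_⟩
  obtain ⟨x, hx, hxy⟩ := hcov.surj a y y.2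
  exact ⟨⟨x, hx⟩, Subtype.ext hxy⟩

noncomputable def pieceEquiv (hcov : IsCovering K φ p brp q brg prj) (a : A) :
    p a ≃ₗ[K] q (φ a) :=
  LinearEquiv.ofBijective _ (hcov.bijective_restrict a)

theorem prj_pieceEquiv_symm (hcov : IsCovering K φ p brp q brg prj) (a : A) (y : q (φ a)) :
    prj ((hcov.pieceEquiv a).symm y) = y :=
  congrArg Subtype.val ((hcov.pieceEquiv a).apply_symm_apply y)

variable [DecidableEq A] {La : Type*} [AddCommGroup La] [Module K La] {pa : A → Submodule K La}

noncomputable def lift (hcov : IsCovering K φ p brp q brg prj) (hpa : DirectSum.IsInternal pa)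
    (ψ : La →ₗ[K] G) (hψ : ∀ a, ∀ x ∈ pa a, ψ x ∈ q (φ a)) : La →ₗ[K] P :=
  hpa.lift fun a => (p a).subtype ∘ₗ (hcov.pieceEquiv a).symm.toLinearMap ∘ₗ ψ.restrict (hψ a)

theorem lift_apply_of_mem (hcov : IsCovering K φ p brp q brg prj)
    (hpa : DirectSum.IsInternal pa) (ψ : La →ₗ[K] G) (hψ : ∀ a, ∀ x ∈ pa a, ψ x ∈ q (φ a))
    {a : A} {x : La} (hx : x ∈ pa a) :
    hcov.lift hpa ψ hψ x = (hcov.pieceEquiv a).symm ⟨ψ x, hψ a x hx⟩ :=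
  hpa.lift_apply_of_mem _ hx

theorem lift_mem (hcov : IsCovering K φ p brp q brg prj)
    (hpa : DirectSum.IsInternal pa) (ψ : La →ₗ[K] G) (hψ : ∀ a, ∀ x ∈ pa a, ψ x ∈ q (φ a))
    {a : A} {x : La} (hx : x ∈ pa a) : hcov.lift hpa ψ hψ x ∈ p a := by
  rw [hcov.lift_apply_of_mem hpa ψ hψ hx]
  exact Submodule.coe_mem _

theorem prj_lift (hcov : IsCovering K φ p brp q brg prj)
    (hpa : DirectSum.IsInternal pa) (ψ : La →ₗ[K] G) (hψ : ∀ a, ∀ x ∈ pa a, ψ x ∈ q (φ a))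
    (x : La) : prj (hcov.lift hpa ψ hψ x) = ψ x := by
  have h : prj ∘ₗ hcov.lift hpa ψ hψ = ψ := hpa.linearMap_ext fun a x hx => by
    rw [LinearMap.comp_apply, hcov.lift_apply_of_mem hpa ψ hψ hx, prj_pieceEquiv_symm]
  exact LinearMap.congr_fun h x

theorem linearMap_ext (hcov : IsCovering K φ p brp q brg prj) (hpa : DirectSum.IsInternal pa)
    {Ψ Ψ' : La →ₗ[K] P} (hΨ : ∀ a, ∀ x ∈ pa a, Ψ x ∈ p a) (hΨ' : ∀ a, ∀ x ∈ pa a, Ψ' x ∈ p a)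
    (h : ∀ x, prj (Ψ x) = prj (Ψ' x)) : Ψ = Ψ' :=
  hpa.linearMap_ext fun a x hx => hcov.eq_of_prj_eq (hΨ a x hx) (hΨ' a x hx) (h x)

theorem map_bracket_of_graded_lift {δ δ' : A →+ ZMod 2} {bra : La → La → La}
    (hcov : IsCovering K φ p brp q brg prj) (hp : IsGradedLieSuperAlg K δ p brp)
    (ha : IsGradedLieSuperAlg K δ' pa bra) {ψ : La →ₗ[K] G}
    (hψ : ∀ x y, ψ (bra x y) = brg (ψ x) (ψ y)) {Ψ : La →ₗ[K] P}
    (hΨ : ∀ a, ∀ x ∈ pa a, Ψ x ∈ p a) (hΨψ : ∀ x, prj (Ψ x) = ψ x) (x y : La) :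
    Ψ (bra x y) = brp (Ψ x) (Ψ y) := by
  have h : ha.bracket.compr₂ Ψ = hp.bracket.compl₁₂ Ψ Ψ := by
    refine ha.internal.linearMap_ext₂ ha.internal fun a b x hx y hy =>
      hcov.eq_of_prj_eq (hΨ _ _ (ha.grade a b x hx y hy))
        (hp.grade a b _ (hΨ a x hx) _ (hΨ b y hy)) ?_
    simp only [LinearMap.compr₂_apply, LinearMap.compl₁₂_apply, IsGradedLieSuperAlg.bracket_apply,
      hΨψ, hcov.hom, hψ]
  exact LinearMap.congr_fun₂ h x y

end IsCovering

namespace Stmt12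

theorem covering_universal_property_general
    {K : Type*} [Field K] {A B : Type*} [AddCommGroup A] [AddCommGroup B]
    [DecidableEq A]
    {P G La : Type*} [AddCommGroup P] [Module K P] [AddCommGroup G] [Module K G]
    [AddCommGroup La] [Module K La]
    (δ : B →+ ZMod 2) (φ : A →+ B)
    (q : B → Submodule K G) (brg : G → G → G)
    (p : A → Submodule K P) (brp : P → P → P)
    (hp : IsGradedLieSuperAlg K (δ.comp φ) p brp)
    (prj : P →ₗ[K] G)
    (hcov : IsCovering K φ p brp q brg prj)
    (pa : A → Submodule K La) (bra : La → La → La)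
    (ha : IsGradedLieSuperAlg K (δ.comp φ) pa bra)
    (ψ : La →ₗ[K] G)
    (hψhom : ∀ x y, ψ (bra x y) = brg (ψ x) (ψ y))
    (hψgr : ∀ a : A, ∀ x ∈ pa a, ψ x ∈ q (φ a)) :
    ∃! Ψ : La →ₗ[K] P,
      (∀ a : A, ∀ x ∈ pa a, Ψ x ∈ p a) ∧
      (∀ x y, Ψ (bra x y) = brp (Ψ x) (Ψ y)) ∧
      (∀ x, prj (Ψ x) = ψ x) := by
  have hΨgr : ∀ a, ∀ x ∈ pa a, hcov.lift ha.internal ψ hψgr x ∈ p a :=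
    fun _ _ hx => hcov.lift_mem ha.internal ψ hψgr hx
  have hΨψ := hcov.prj_lift ha.internal ψ hψgr
  refine ⟨hcov.lift ha.internal ψ hψgr,
    ⟨hΨgr, hcov.map_bracket_of_graded_lift hp ha hψhom hΨgr hΨψ, hΨψ⟩, ?_⟩
  rintro Ψ' ⟨hΨ'gr, -, hΨ'ψ⟩
  exact hcov.linearMap_ext ha.internal hΨ'gr hΨgr fun x => (hΨ'ψ x).trans (hΨψ x).symm

/-- Let `φ : A → B` be a surjective homomorphism of abelian groups,
`𝔞` an `A`-graded Lie superalgebra, `𝔤` a `B`-graded Lie superalgebra,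
`ψ : 𝔞 → 𝔤` a `B`-graded Lie superalgebra homomorphism (where `𝔞` is `B`-graded via `φ`),
and `(𝔭, Π')` a `φ`-covering of `𝔤`.  Then there exists a unique `A`-graded Lie
superalgebra homomorphism `Ψ : 𝔞 → 𝔭` with `Π' ∘ Ψ = ψ`. -/
theorem covering_universal_property
    {K : Type*} [Field K] {A B : Type*} [AddCommGroup A] [AddCommGroup B]
    [DecidableEq A] [DecidableEq B]
    {P G La : Type*} [AddCommGroup P] [Module K P] [AddCommGroup G] [Module K G]
    [AddCommGroup La] [Module K La]
    (δ : B →+ ZMod 2) (φ : A →+ B) (hφ : Function.Surjective φ)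
    (q : B → Submodule K G) (brg : G → G → G)
    (hg : IsGradedLieSuperAlg K δ q brg)
    (p : A → Submodule K P) (brp : P → P → P)
    (hp : IsGradedLieSuperAlg K (δ.comp φ) p brp)
    (prj : P →ₗ[K] G)
    (hcov : IsCovering K φ p brp q brg prj)
    (pa : A → Submodule K La) (bra : La → La → La)
    (ha : IsGradedLieSuperAlg K (δ.comp φ) pa bra)
    (ψ : La →ₗ[K] G)
    (hψhom : ∀ x y, ψ (bra x y) = brg (ψ x) (ψ y))
    (hψgr : ∀ a : A, ∀ x ∈ pa a, ψ x ∈ q (φ a)) :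
    ∃! Ψ : La →ₗ[K] P,
      (∀ a : A, ∀ x ∈ pa a, Ψ x ∈ p a) ∧
      (∀ x y, Ψ (bra x y) = brp (Ψ x) (Ψ y)) ∧
      (∀ x, prj (Ψ x) = ψ x) :=
  covering_universal_property_general δ φ q brg p brp hp prj hcov pa bra ha ψ hψhom hψgr

end Stmt12
end

section
/- Let 𝔤 be a Lie superalgebra. The map Π': 𝔭 → 𝔤 defined on 𝔭 = ι'∘π'∘gr'∘T'^∞(𝔤) by Π'( Σ_{C(I)=i-1} d_I(X) + Σ_{C(J)=i} d_J(X) ) = (1/i!) X ∈ 𝔤_ī is a Lie superalgebra homomorphism, and Π'|_{𝔭_n}: 𝔭_n → 𝔤_{n̄} is a linear bijection for every n ≥ 0. Hence 𝔭 is a covering of 𝔤 along the quotient homomorphism ℤ → ℤ₂ with support ℤ_{≥0}. -/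
namespace Stmt15

variable {K : Type*} [Field K] [CharZero K]
variable {g0 g1 : Type*} [AddCommGroup g0] [Module K g0] [AddCommGroup g1] [Module K g1]
variable (b00 : g0 → g0 → g0) (b01 : g0 → g1 → g1) (b10 : g1 → g0 → g1) (b11 : g1 → g1 → g0)

/-- Bracket component of `𝔥 = π'(gr'(T'^∞(𝔤)))` pairing `d_I(𝔤)` with `d_J(𝔤)`. -/
def hComp (I J : Finset ℕ) : (g0 × g1) → (g0 × g1) → (g0 × g1) :=
  fun v w =>
    ((if I.card % 2 = 1 ∧ J.card % 2 = 1 then 0 else b00 v.1 w.1) +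
       (if I.card % 2 = 0 ∧ J.card % 2 = 0 then 0 else b11 v.2 w.2),
     (if I.card % 2 = 1 ∧ J.card % 2 = 0 then 0 else b01 v.1 w.2) +
       (if I.card % 2 = 0 ∧ J.card % 2 = 1 then 0 else b10 v.2 w.1))

/-- The bracket of `𝔥`. -/
def hBr : (∀ _ : Finset ℕ, g0 × g1) → (∀ _ : Finset ℕ, g0 × g1) →
    (∀ _ : Finset ℕ, g0 × g1) :=
  fun f g S => ∑ I ∈ S.powerset, hComp b00 b01 b10 b11 I (S \ I) (f I) (g (S \ I))

/-- For even `n`, `X ∈ 𝔤₀`: the diagonal element `Σ_{#I=n-1} d_I(X) + Σ_{#J=n} d_J(X) ∈ 𝔭_n`. -/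
def eltE (n : ℕ) (X : g0) : ∀ _ : Finset ℕ, g0 × g1 :=
  fun I => (if I.card = n ∨ I.card + 1 = n then X else 0, 0)

/-- For odd `n`, `X ∈ 𝔤₁`: the diagonal element of `𝔭_n`. -/
def eltO (n : ℕ) (X : g1) : ∀ _ : Finset ℕ, g0 × g1 :=
  fun I => (0, if I.card = n ∨ I.card + 1 = n then X else 0)

/-- The covering map `Π'` on `𝔭_n` for `n` even: `Π'(Σ d_I(X) + Σ d_J(X)) = (1/n!) X`
(the value `X` is read off from any slot of cardinality `n`). -/
noncomputable def prjE (n : ℕ) (f : ∀ _ : Finset ℕ, g0 × g1) : g0 :=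
  ((n.factorial : K))⁻¹ • (f (Finset.range n)).1

/-- The covering map `Π'` on `𝔭_n` for `n` odd. -/
noncomputable def prjO (n : ℕ) (f : ∀ _ : Finset ℕ, g0 × g1) : g1 :=
  ((n.factorial : K))⁻¹ • (f (Finset.range n)).2

end Stmt15

open Finset Nat

lemma sum_powerset_ite_card_eq {α M : Type*} [AddCommMonoid M] (s : Finset α) (i : ℕ) (c : M) :
    ∑ I ∈ s.powerset, (if I.card = i then c else 0) = s.card.choose i • c := by
  rw [← sum_filter, ← powersetCard_eq_filter, sum_const, card_powersetCard]

lemma inv_factorial_smul_choose_nsmul {K V : Type*} [Field K] [CharZero K] [AddCommGroup V]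
    [Module K V] (i j : ℕ) (v : V) :
    ((i + j)! : K)⁻¹ • ((i + j).choose i • v) = (i ! : K)⁻¹ • (j ! : K)⁻¹ • v := by
  have hfac (n : ℕ) : (n ! : K) ≠ 0 := mod_cast factorial_ne_zero n
  rw [← Nat.cast_smul_eq_nsmul K, smul_smul, smul_smul, Nat.cast_add_choose]
  congr 1
  field_simp [hfac]

lemma bijective_subtype_of_apply_eq_smul {K F V : Type*} [Field K] [AddCommGroup V] [Module K V]
    (elt : V → F) (prj : F → V) {c : K} (hc : c ≠ 0) (hprj : ∀ X, prj (elt X) = c • X) :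
    Function.Bijective (fun f : {f : F // ∃ X : V, f = elt X} => prj f.1) := by
  constructor
  · rintro ⟨_, X, rfl⟩ ⟨_, Y, rfl⟩ hXY
    simp only [hprj] at hXY
    rw [smul_right_injective V hc hXY]
  · intro Y
    exact ⟨⟨elt (c⁻¹ • Y), _, rfl⟩, by simp only [hprj, smul_inv_smul₀ hc]⟩

lemma map_zero_left_of_smul_left {K M N P : Type*} [Field K] [AddCommGroup M] [Module K M]
    [AddCommGroup P] [Module K P] {b : M → N → P} (hb : ∀ (c : K) x y, b (c • x) y = c • b x y)
    (y : N) : b 0 y = 0 := by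
  simpa using hb 0 0 y

lemma map_zero_right_of_smul_right {K M N P : Type*} [Field K] [AddCommGroup N] [Module K N]
    [AddCommGroup P] [Module K P] {b : M → N → P} (hb : ∀ (c : K) x y, b x (c • y) = c • b x y)
    (x : M) : b x 0 = 0 := by
  simpa using hb 0 x 0

namespace Stmt15

variable {K : Type*} [Field K] [CharZero K]
variable {g0 g1 : Type*} [AddCommGroup g0] [Module K g0] [AddCommGroup g1] [Module K g1]
variable (b00 : g0 → g0 → g0) (b01 : g0 → g1 → g1) (b10 : g1 → g0 → g1) (b11 : g1 → g1 → g0)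

section

variable {b00 b01 b10 b11}

omit [CharZero K] in
lemma hComp_zero_left (h : IsLieSuperAlg K b00 b01 b10 b11) (I J : Finset ℕ) (w : g0 × g1) :
    hComp b00 b01 b10 b11 I J 0 w = 0 := by
  simp [hComp, map_zero_left_of_smul_left h.b00_smull, map_zero_left_of_smul_left h.b01_smull,
    map_zero_left_of_smul_left h.b10_smull, map_zero_left_of_smul_left h.b11_smull]

omit [CharZero K] in
lemma hComp_zero_right (h : IsLieSuperAlg K b00 b01 b10 b11) (I J : Finset ℕ) (v : g0 × g1) :
    hComp b00 b01 b10 b11 I J v 0 = 0 := by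
  simp [hComp, map_zero_right_of_smul_right h.b00_smulr, map_zero_right_of_smul_right h.b01_smulr,
    map_zero_right_of_smul_right h.b10_smulr, map_zero_right_of_smul_right h.b11_smulr]

omit [CharZero K] in
lemma hBr_range_add_eq_choose_nsmul (h : IsLieSuperAlg K b00 b01 b10 b11) {i j : ℕ}
    {f g : Finset ℕ → g0 × g1} (c : g0 × g1)
    (hf : ∀ I : Finset ℕ, ¬(I.card = i ∨ I.card + 1 = i) → f I = 0)
    (hg : ∀ J : Finset ℕ, ¬(J.card = j ∨ J.card + 1 = j) → g J = 0)
    (hc : ∀ I J : Finset ℕ, I.card = i → J.card = j →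
      hComp b00 b01 b10 b11 I J (f I) (g J) = c) :
    hBr b00 b01 b10 b11 f g (range (i + j)) = (i + j).choose i • c := by
  have hsum := sum_powerset_ite_card_eq (range (i + j)) i c
  rw [card_range] at hsum
  rw [hBr, ← hsum]
  refine sum_congr rfl fun I hI => ?_
  have hcompl : (range (i + j) \ I).card = i + j - I.card := by
    rw [card_sdiff_of_subset (mem_powerset.mp hI), card_range]
  have hle : I.card ≤ i + j := by simpa using card_le_card (mem_powerset.mp hI)
  split_ifs with hIi
  · exact hc _ _ hIi (by omega)
  · by_cases hfI : I.card = i ∨ I.card + 1 = i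
    · rw [hg _ (by omega), hComp_zero_right h]
    · rw [hf _ hfI, hComp_zero_left h]

lemma eltE_eq_zero {n : ℕ} {X : g0} {I : Finset ℕ} (hI : ¬(I.card = n ∨ I.card + 1 = n)) :
    eltE (g1 := g1) n X I = 0 := by
  simp [eltE, hI]

lemma eltO_eq_zero {n : ℕ} {X : g1} {I : Finset ℕ} (hI : ¬(I.card = n ∨ I.card + 1 = n)) :
    eltO (g0 := g0) n X I = 0 := by
  simp [eltO, hI]

omit [CharZero K] [Module K g1] in
lemma prjE_eltE (n : ℕ) (X : g0) :
    prjE (K := K) (g1 := g1) n (eltE n X) = (n ! : K)⁻¹ • X := by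
  simp [prjE, eltE]

omit [CharZero K] [Module K g0] in
lemma prjO_eltO (n : ℕ) (X : g1) :
    prjO (K := K) (g0 := g0) n (eltO n X) = (n ! : K)⁻¹ • X := by
  simp [prjO, eltO]

lemma prjE_hBr_eltE_eltE (h : IsLieSuperAlg K b00 b01 b10 b11) {i j : ℕ} (hi : i % 2 = 0)
    (hj : j % 2 = 0) (X Y : g0) :
    prjE (K := K) (i + j) (hBr b00 b01 b10 b11 (eltE i X) (eltE j Y)) =
      b00 (prjE (K := K) (g1 := g1) i (eltE i X)) (prjE (K := K) (g1 := g1) j (eltE j Y)) := by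
  rw [prjE, hBr_range_add_eq_choose_nsmul h (b00 X Y, 0) (fun _ => eltE_eq_zero)
    (fun _ => eltE_eq_zero) ?_, Prod.smul_fst, inv_factorial_smul_choose_nsmul, prjE_eltE,
    prjE_eltE, h.b00_smull, h.b00_smulr]
  intro I J hI hJ
  simp [hComp, eltE, hI, hJ, hi, hj, map_zero_right_of_smul_right h.b01_smulr,
    map_zero_left_of_smul_left h.b10_smull]

lemma prjO_hBr_eltE_eltO (h : IsLieSuperAlg K b00 b01 b10 b11) {i j : ℕ} (hi : i % 2 = 0)
    (hj : j % 2 = 1) (X : g0) (Y : g1) :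
    prjO (K := K) (i + j) (hBr b00 b01 b10 b11 (eltE i X) (eltO j Y)) =
      b01 (prjE (K := K) (g1 := g1) i (eltE i X)) (prjO (K := K) (g0 := g0) j (eltO j Y)) := by
  rw [prjO, hBr_range_add_eq_choose_nsmul h (0, b01 X Y) (fun _ => eltE_eq_zero)
    (fun _ => eltO_eq_zero) ?_, Prod.smul_snd, inv_factorial_smul_choose_nsmul, prjE_eltE,
    prjO_eltO, h.b01_smull, h.b01_smulr]
  intro I J hI hJ
  simp [hComp, eltE, eltO, hI, hJ, hi, hj, map_zero_right_of_smul_right h.b00_smulr,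
    map_zero_left_of_smul_left h.b11_smull]

lemma prjO_hBr_eltO_eltE (h : IsLieSuperAlg K b00 b01 b10 b11) {i j : ℕ} (hi : i % 2 = 1)
    (hj : j % 2 = 0) (X : g1) (Y : g0) :
    prjO (K := K) (i + j) (hBr b00 b01 b10 b11 (eltO i X) (eltE j Y)) =
      b10 (prjO (K := K) (g0 := g0) i (eltO i X)) (prjE (K := K) (g1 := g1) j (eltE j Y)) := by
  rw [prjO, hBr_range_add_eq_choose_nsmul h (0, b10 X Y) (fun _ => eltO_eq_zero)
    (fun _ => eltE_eq_zero) ?_, Prod.smul_snd, inv_factorial_smul_choose_nsmul, prjO_eltO,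
    prjE_eltE, h.b10_smull, h.b10_smulr]
  intro I J hI hJ
  simp [hComp, eltE, eltO, hI, hJ, hi, hj, map_zero_left_of_smul_left h.b00_smull,
    map_zero_right_of_smul_right h.b11_smulr]

lemma prjE_hBr_eltO_eltO (h : IsLieSuperAlg K b00 b01 b10 b11) {i j : ℕ} (hi : i % 2 = 1)
    (hj : j % 2 = 1) (X Y : g1) :
    prjE (K := K) (i + j) (hBr b00 b01 b10 b11 (eltO i X) (eltO j Y)) =
      b11 (prjO (K := K) (g0 := g0) i (eltO i X)) (prjO (K := K) (g0 := g0) j (eltO j Y)) := by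
  rw [prjE, hBr_range_add_eq_choose_nsmul h (b11 X Y, 0) (fun _ => eltO_eq_zero)
    (fun _ => eltO_eq_zero) ?_, Prod.smul_fst, inv_factorial_smul_choose_nsmul, prjO_eltO,
    prjO_eltO, h.b11_smull, h.b11_smulr]
  intro I J hI hJ
  simp [hComp, eltO, hI, hJ, hi, hj, map_zero_left_of_smul_left h.b01_smull,
    map_zero_right_of_smul_right h.b10_smulr]

end

/-- The map `Π' : 𝔭 → 𝔤`, `Π'(Σ_{#I=i-1} d_I(X) + Σ_{#J=i} d_J(X)) = (1/i!) X`,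
is a Lie superalgebra homomorphism on the diagonal subalgebra
`𝔭 = ι'∘π'∘gr'∘T'^∞(𝔤)`, and `Π'|_{𝔭_n} : 𝔭_n → 𝔤_{n̄}` is a linear bijection for every
`n ≥ 0`.  Hence `𝔭` is a covering of `𝔤` along `ℤ → ℤ₂` with support `ℤ≥0`. -/
theorem diag_is_covering (h : IsLieSuperAlg K b00 b01 b10 b11) :
    (∀ i j : ℕ, i % 2 = 0 → j % 2 = 0 → ∀ (X Y : g0),
      prjE (K := K) (g0 := g0) (g1 := g1) (i + j) (hBr b00 b01 b10 b11 (eltE i X) (eltE j Y)) =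
        b00 (prjE (K := K) (g0 := g0) (g1 := g1) i (eltE i X)) (prjE (K := K) (g0 := g0) (g1 := g1) j (eltE j Y))) ∧
    (∀ i j : ℕ, i % 2 = 0 → j % 2 = 1 → ∀ (X : g0) (Y : g1),
      prjO (K := K) (g0 := g0) (g1 := g1) (i + j) (hBr b00 b01 b10 b11 (eltE i X) (eltO j Y)) =
        b01 (prjE (K := K) (g0 := g0) (g1 := g1) i (eltE i X)) (prjO (K := K) (g0 := g0) (g1 := g1) j (eltO j Y))) ∧
    (∀ i j : ℕ, i % 2 = 1 → j % 2 = 0 → ∀ (X : g1) (Y : g0),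
      prjO (K := K) (g0 := g0) (g1 := g1) (i + j) (hBr b00 b01 b10 b11 (eltO i X) (eltE j Y)) =
        b10 (prjO (K := K) (g0 := g0) (g1 := g1) i (eltO i X)) (prjE (K := K) (g0 := g0) (g1 := g1) j (eltE j Y))) ∧
    (∀ i j : ℕ, i % 2 = 1 → j % 2 = 1 → ∀ (X Y : g1),
      prjE (K := K) (g0 := g0) (g1 := g1) (i + j) (hBr b00 b01 b10 b11 (eltO i X) (eltO j Y)) =
        b11 (prjO (K := K) (g0 := g0) (g1 := g1) i (eltO i X)) (prjO (K := K) (g0 := g0) (g1 := g1) j (eltO j Y))) ∧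
    (∀ n : ℕ, n % 2 = 0 →
      Function.Bijective
        (fun f : {f : ∀ _ : Finset ℕ, g0 × g1 // ∃ X : g0, f = eltE n X} =>
          prjE (K := K) (g0 := g0) (g1 := g1) n f.1)) ∧
    (∀ n : ℕ, n % 2 = 1 →
      Function.Bijective
        (fun f : {f : ∀ _ : Finset ℕ, g0 × g1 // ∃ X : g1, f = eltO n X} =>
          prjO (K := K) (g0 := g0) (g1 := g1) n f.1)) := by
  have hfac (n : ℕ) : (n ! : K)⁻¹ ≠ 0 := inv_ne_zero (mod_cast factorial_ne_zero n)
  exact ⟨fun _ _ hi hj => prjE_hBr_eltE_eltE h hi hj, fun _ _ hi hj => prjO_hBr_eltE_eltO h hi hj,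
    fun _ _ hi hj => prjO_hBr_eltO_eltE h hi hj, fun _ _ hi hj => prjE_hBr_eltO_eltO h hi hj,
    fun n _ => bijective_subtype_of_apply_eq_smul _ _ (hfac n) (prjE_eltE n),
    fun n _ => bijective_subtype_of_apply_eq_smul _ _ (hfac n) (prjO_eltO n)⟩

end Stmt15
end

section
/- Let 𝔤 = 𝔤₀ ⊕ 𝔤₁ be a Lie superalgebra and t a formal even variable. Then the ℤ≥0-covering 𝔭 = F'(𝔤) is isomorphic as a ℤ-graded Lie superalgebra to the non-negative loop subalgebra ⊕_{i≥0} 𝔤_ī ⊗ t^i ⊂ 𝔤 ⊗ K[t], with 𝔭_i ≅ 𝔤_ī ⊗ t^i, where the bracket on 𝔤 ⊗ K[t] is [X ⊗ t^i, Y ⊗ t^j] = [X,Y] ⊗ t^{i+j} and the parity of X ⊗ t^i is ī = i mod 2 (which equals |X| on the displayed subspace). -/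
/-- A Lie superalgebra structure on a single carrier `L`: a ℤ₂-grading by submodules and a
bilinear graded bracket with super skew-symmetry and the super Jacobi identity. -/
structure IsLieSuperOn (K : Type*) [Field K] {L : Type*} [AddCommGroup L] [Module K L]
    (p : ZMod 2 → Submodule K L) (br : L → L → L) : Prop where
  add_left : ∀ x x' y, br (x + x') y = br x y + br x' y
  smul_left : ∀ (c : K) x y, br (c • x) y = c • br x y
  add_right : ∀ x y y', br x (y + y') = br x y + br x y'
  smul_right : ∀ (c : K) x y, br x (c • y) = c • br x y
  internal : DirectSum.IsInternal p
  grade : ∀ i j, ∀ x ∈ p i, ∀ y ∈ p j, br x y ∈ p (i + j)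
  skew : ∀ i j, ∀ x ∈ p i, ∀ y ∈ p j, br x y = - ssign K i j • br y x
  jacobi : ∀ i j, ∀ x ∈ p i, ∀ y ∈ p j, ∀ z,
    br x (br y z) - ssign K i j • br y (br x z) = br (br x y) z

namespace Stmt16

/-- The loop bracket on `𝔤 ⊗ K[t] = ℕ →₀ G`: `[X ⊗ tⁱ, Y ⊗ tʲ] = [X,Y] ⊗ t^{i+j}`. -/
noncomputable def loopBr {G : Type*} [AddCommGroup G]
    (brg : G → G → G) (f g : ℕ →₀ G) : ℕ →₀ G :=
  f.sum fun i v => g.sum fun j w => Finsupp.single (i + j) (brg v w)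

/-- The degree-`i` piece `𝔤_ī ⊗ tⁱ` of the non-negative loop algebra `⊕_{i≥0} 𝔤_ī ⊗ tⁱ`:
the parity of `X ⊗ tⁱ` is `ī = i mod 2`, which equals `|X|` on this subspace. -/
noncomputable def loopGrade {K : Type*} [Field K] {G : Type*} [AddCommGroup G] [Module K G]
    (qg : ZMod 2 → Submodule K G) (i : ℕ) : Submodule K (ℕ →₀ G) :=
  Submodule.span K {z : ℕ →₀ G | ∃ x ∈ qg (i : ZMod 2), z = Finsupp.single i x}

/-!
Decompose `𝔭 = ⊕ 𝔭ᵢ` and send a homogeneous `x ∈ 𝔭ᵢ` to `Π'(x) ⊗ tⁱ`. Since `𝔭` lives in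
degrees `≥ 0` and `Π'` is injective on each `𝔭ᵢ`, this is injective, and since `Π'` maps `𝔭ᵢ`
onto `𝔤_ī` it maps `𝔭ᵢ` onto `𝔤_ī ⊗ tⁱ`. On homogeneous elements it respects brackets because
`Π'` does and `[𝔭ᵢ, 𝔭ⱼ] ⊆ 𝔭ᵢ₊ⱼ`; both brackets are biadditive, so it respects them everywhere.
-/

section Loop

variable {G : Type*} [AddCommGroup G] {brg : G → G → G}

theorem loopBr_single_single (hl : ∀ x x' y, brg (x + x') y = brg x y + brg x' y)
    (hr : ∀ x y y', brg x (y + y') = brg x y + brg x y') (a b : ℕ) (v w : G) :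
    loopBr brg (Finsupp.single a v) (Finsupp.single b w) = Finsupp.single (a + b) (brg v w) := by
  have h0l : ∀ w, brg 0 w = 0 := fun w => by simpa using hl 0 0 w
  have h0r : ∀ v, brg v 0 = 0 := fun v => by simpa using hr v 0 0
  simp [loopBr, h0l, h0r]

theorem loopBr_add_left (hl : ∀ x x' y, brg (x + x') y = brg x y + brg x' y)
    (f f' g : ℕ →₀ G) : loopBr brg (f + f') g = loopBr brg f g + loopBr brg f' g := by
  have h0l : ∀ w, brg 0 w = 0 := fun w => by simpa using hl 0 0 w
  refine Finsupp.sum_add_index' (fun i => by simp [h0l]) fun i v v' => ?_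
  simp only [hl, Finsupp.single_add, Finsupp.sum_add]

theorem loopBr_add_right (hr : ∀ x y y', brg x (y + y') = brg x y + brg x y')
    (f g g' : ℕ →₀ G) : loopBr brg f (g + g') = loopBr brg f g + loopBr brg f g' := by
  have h0r : ∀ v, brg v 0 = 0 := fun v => by simpa using hr v 0 0
  rw [loopBr, loopBr, loopBr, ← Finsupp.sum_add]
  refine Finsupp.sum_congr fun i _ => Finsupp.sum_add_index' (fun j => by simp [h0r]) ?_
  intro j w w'
  rw [hr, Finsupp.single_add]

theorem loopGrade_eq_map {K : Type*} [Field K] [Module K G] (qg : ZMod 2 → Submodule K G)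
    (i : ℕ) : loopGrade qg i = (qg i).map (Finsupp.lsingle i) := by
  rw [loopGrade, ← Submodule.span_eq (Submodule.map _ _), Submodule.map_coe]
  congr 1
  ext z
  simp [eq_comm]

end Loop

theorem additive_ext_of_iSup_eq_top {ι R P M : Type*} [Semiring R] [AddCommMonoid P]
    [Module R P] [AddCommGroup M] {p : ι → Submodule R P} (htop : ⨆ i, p i = ⊤) {f g : P → M}
    (hf : ∀ x y, f (x + y) = f x + f y) (hg : ∀ x y, g (x + y) = g x + g y)
    (h : ∀ i, ∀ x ∈ p i, f x = g x) : f = g := by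
  funext x
  refine Submodule.iSup_induction p (motive := fun x => f x = g x)
    (htop ▸ Submodule.mem_top : x ∈ ⨆ i, p i) h ?_ fun x y hx hy => by rw [hf, hg, hx, hy]
  rw [show f 0 = 0 by simpa using hf 0 0, show g 0 = 0 by simpa using hg 0 0]

theorem iSup_natCast_eq_top_of_neg_eq_bot {R P : Type*} [Semiring R] [AddCommMonoid P]
    [Module R P] {p : ℤ → Submodule R P} (htop : ⨆ i, p i = ⊤) (hneg : ∀ i < 0, p i = ⊥) :
    ⨆ n : ℕ, p n = ⊤ := by
  refine eq_top_iff.2 (htop ▸ iSup_le fun i => ?_)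
  rcases lt_or_ge i 0 with hi | hi
  · simp [hneg i hi]
  · lift i to ℕ using hi
    exact le_iSup (fun n : ℕ => p n) i

section Covering

variable {R P G : Type*} [Ring R] [AddCommGroup P] [Module R P] [AddCommGroup G] [Module R G]
  {pgr : ℤ → Submodule R P} (hint : DirectSum.IsInternal pgr) (prj : P →ₗ[R] G)

open scoped Classical in
/-- `x ↦ ∑_{n ≥ 0} Π'(xₙ) ⊗ tⁿ`, where `xₙ ∈ 𝔭ₙ` is the degree-`n` component of `x`;
components of negative degree are dropped. -/
noncomputable def coveringToLoop : P →ₗ[R] (ℕ →₀ G) :=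
  Finsupp.lcomapDomain ((↑) : ℕ → ℤ) Nat.cast_injective ∘ₗ
    (finsuppLequivDFinsupp R).symm.toLinearMap ∘ₗ
    DFinsupp.mapRange.linearMap (fun i => prj ∘ₗ (pgr i).subtype) ∘ₗ
    (LinearEquiv.ofBijective (DirectSum.coeLinearMap pgr) hint).symm.toLinearMap

theorem coveringToLoop_apply (x : P) (n : ℕ) :
    coveringToLoop hint prj x n =
      prj ((LinearEquiv.ofBijective (DirectSum.coeLinearMap pgr) hint).symm x n) := by
  simp [coveringToLoop]

theorem coveringToLoop_of_mem {n : ℕ} {x : P} (hx : x ∈ pgr n) :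
    coveringToLoop hint prj x = Finsupp.single n (prj x) := by
  ext m
  rw [coveringToLoop_apply]
  rcases eq_or_ne n m with rfl | hnm
  · simp [hint.ofBijective_coeLinearMap_of_mem hx]
  · simp [hint.ofBijective_coeLinearMap_of_mem_ne (Nat.cast_injective.ne hnm) hx, hnm]

theorem coveringToLoop_injective (hneg : ∀ i < 0, pgr i = ⊥)
    (hinj : ∀ i, ∀ x ∈ pgr i, prj x = 0 → x = 0) :
    Function.Injective (coveringToLoop hint prj) := by
  refine (injective_iff_map_eq_zero _).2 fun x hx => ?_
  apply (LinearEquiv.ofBijective (DirectSum.coeLinearMap pgr) hint).symm.injective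
  rw [map_zero]
  ext i : 1
  rcases lt_or_ge i 0 with hi | hi
  · exact Subtype.ext ((Submodule.eq_bot_iff _).1 (hneg i hi) _ (Subtype.mem _))
  · lift i to ℕ using hi
    refine Subtype.ext (hinj _ _ (Subtype.mem _) ?_)
    rw [← coveringToLoop_apply, hx, Finsupp.zero_apply]

theorem map_coveringToLoop_grade (n : ℕ) :
    (pgr n).map (coveringToLoop hint prj) = ((pgr n).map prj).map (Finsupp.lsingle n) := by
  rw [← Submodule.map_comp, ← LinearMap.range_domRestrict, ← LinearMap.range_domRestrict]
  congr 1
  ext ⟨x, hx⟩ : 1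
  simp [coveringToLoop_of_mem hint prj hx]

end Covering

theorem coveringToLoop_bracket {K : Type*} [Field K] {G : Type*} [AddCommGroup G] [Module K G]
    {qg : ZMod 2 → Submodule K G} {brg : G → G → G} (hg : IsLieSuperOn K qg brg)
    {P : Type*} [AddCommGroup P] [Module K P] {pgr : ℤ → Submodule K P} {brp : P → P → P}
    (hp : IsGradedLieSuperAlg K (Int.castAddHom (ZMod 2)) pgr brp) (prj : P →ₗ[K] G)
    (hhom : ∀ x y, prj (brp x y) = brg (prj x) (prj y)) (hneg : ∀ i < 0, pgr i = ⊥) (x y : P) :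
    coveringToLoop hp.internal prj (brp x y) =
      loopBr brg (coveringToLoop hp.internal prj x) (coveringToLoop hp.internal prj y) := by
  set e := coveringToLoop hp.internal prj
  have htop : ⨆ n : ℕ, pgr n = ⊤ :=
    iSup_natCast_eq_top_of_neg_eq_bot hp.internal.submodule_iSup_eq_top hneg
  have homogeneous : ∀ m n : ℕ, ∀ x ∈ pgr m, ∀ y ∈ pgr n,
      e (brp x y) = loopBr brg (e x) (e y) := by
    intro m n x hx y hy
    have hxy : brp x y ∈ pgr ↑(m + n) := by exact_mod_cast hp.grade _ _ x hx y hy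
    rw [coveringToLoop_of_mem _ _ hx, coveringToLoop_of_mem _ _ hy, coveringToLoop_of_mem _ _ hxy,
      hhom, loopBr_single_single hg.add_left hg.add_right]
  have left_homogeneous : ∀ m : ℕ, ∀ x ∈ pgr m, ∀ y, e (brp x y) = loopBr brg (e x) (e y) :=
    fun m x hx => congrFun <| additive_ext_of_iSup_eq_top htop
      (fun y y' => by rw [hp.add_right, map_add])
      (fun y y' => by rw [map_add, loopBr_add_right hg.add_right])
      fun n y hy => homogeneous m n x hx y hy
  exact congrFun (additive_ext_of_iSup_eq_top htop (f := fun x => e (brp x y))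
    (fun x x' => by rw [hp.add_left, map_add])
    (fun x x' => by rw [map_add, loopBr_add_left hg.add_left])
    fun m x hx => left_homogeneous m x hx y) x

/-- Let `𝔤 = 𝔤₀ ⊕ 𝔤₁` be a Lie superalgebra and `t` a formal even
variable.  Any `ℤ≥0`-covering `𝔭 = F'(𝔤)` of `𝔤` (i.e. a ℤ-graded Lie superalgebra with
support `ℤ≥0` and a covering homomorphism `Π' : 𝔭 → 𝔤` along `ℤ → ℤ₂`) is isomorphic, as
a ℤ-graded Lie superalgebra, to the non-negative loop subalgebra
`⊕_{i≥0} 𝔤_ī ⊗ tⁱ ⊂ 𝔤 ⊗ K[t]`, with `𝔭_i ≅ 𝔤_ī ⊗ tⁱ`, where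
`[X ⊗ tⁱ, Y ⊗ tʲ] = [X,Y] ⊗ t^{i+j}` and the parity of `X ⊗ tⁱ` is `i mod 2`. -/
theorem covering_iso_loop
    {K : Type*} [Field K]
    {G : Type*} [AddCommGroup G] [Module K G]
    (qg : ZMod 2 → Submodule K G) (brg : G → G → G)
    (hg : IsLieSuperOn K qg brg)
    {P : Type*} [AddCommGroup P] [Module K P]
    (pgr : ℤ → Submodule K P) (brp : P → P → P)
    (hp : IsGradedLieSuperAlg K (Int.castAddHom (ZMod 2)) pgr brp)
    (prj : P →ₗ[K] G)
    (hhom : ∀ x y, prj (brp x y) = brg (prj x) (prj y))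
    (hmaps : ∀ i : ℤ, ∀ x ∈ pgr i, prj x ∈ qg (i : ZMod 2))
    (hinj : ∀ i : ℤ, ∀ x ∈ pgr i, prj x = 0 → x = 0)
    (hsurj : ∀ i : ℤ, 0 ≤ i → ∀ y ∈ qg (i : ZMod 2), ∃ x ∈ pgr i, prj x = y)
    (hsupp : ∀ i : ℤ, i < 0 → pgr i = ⊥) :
    ∃ e : P →ₗ[K] (ℕ →₀ G),
      Function.Injective e ∧
      (∀ x y, e (brp x y) = loopBr brg (e x) (e y)) ∧
      (∀ i : ℕ, Submodule.map e (pgr (i : ℤ)) = loopGrade qg i) := by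
  refine ⟨coveringToLoop hp.internal prj, coveringToLoop_injective hp.internal prj hsupp hinj,
    coveringToLoop_bracket hg hp prj hhom hsupp, fun n => ?_⟩
  have hprj : (pgr n).map prj = qg n := by
    refine le_antisymm (Submodule.map_le_iff_le_comap.2 fun x hx => by simpa using hmaps n x hx)
      fun y hy => ?_
    obtain ⟨x, hx, rfl⟩ := hsurj n (Int.natCast_nonneg n) y (by simpa using hy)
    exact Submodule.mem_map_of_mem hx
  rw [map_coveringToLoop_grade, hprj, loopGrade_eq_map]

end Stmt16
end
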